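/- arXiv:2601.17169 — 10 statements merged into one kernel-verified Lean document; each statement's English description precedes it below -/
import Mathlib

section
/- Let G be a tournament with no induced subtournament isomorphic to C_4, where C_4 is the 4-vertex tournament with vertices a,b,c,d and arcs a→b, c→a, a→d, b→c, d→b, c→d. Let T = {a,b,c} be a cyclic triangle in G with a→b, b→c, c→a. Then every vertex v of G outside T is either a common out-neighbor of all of a,b,c, or a common in-neighbor of all of a,b,c. -/
/-! A vertex `v` outside a cyclic triangle `x → y → z → x` with `x → v → y` yields a copy of `C₄`
whichever way the arc between `v` and `z` points: `z → v` makes `v` the fourth vertex `d` over the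
triangle, and `v → z` gives the cyclic triangle `v → z → x` with `y` as `d`. So out-neighbours of a
triangle vertex are out-neighbours of its successor, in-neighbours of a vertex are in-neighbours of
its predecessor, and `v` is comparable with all three vertices in the same direction. -/

section CyclicTriangle

variable {V : Type*} {r : V → V → Prop} {x y z v : V}

theorem not_rel_of_rel_of_cyclic (htot : ∀ u w : V, u ≠ w → r u w ∨ r w u)
    (hC4free : ¬ ∃ a b c d : V, r a b ∧ r b c ∧ r c a ∧ r a d ∧ r d b ∧ r c d)
    (hxy : r x y) (hyz : r y z) (hzx : r z x) (hvz : v ≠ z) (hxv : r x v) : ¬ r v y := by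
  intro hvy
  rcases htot v z hvz with hvz' | hzv
  · exact hC4free ⟨v, z, x, y, hvz', hzx, hxv, hvy, hyz, hxy⟩
  · exact hC4free ⟨x, y, z, v, hxy, hyz, hzx, hxv, hvy, hzv⟩

theorem rel_of_rel_of_cyclic (htot : ∀ u w : V, u ≠ w → r u w ∨ r w u)
    (hC4free : ¬ ∃ a b c d : V, r a b ∧ r b c ∧ r c a ∧ r a d ∧ r d b ∧ r c d)
    (hxy : r x y) (hyz : r y z) (hzx : r z x) (hvy : v ≠ y) (hvz : v ≠ z) (hxv : r x v) :
    r y v :=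
  (htot y v hvy.symm).resolve_right (not_rel_of_rel_of_cyclic htot hC4free hxy hyz hzx hvz hxv)

theorem rel_of_rel_of_cyclic' (htot : ∀ u w : V, u ≠ w → r u w ∨ r w u)
    (hC4free : ¬ ∃ a b c d : V, r a b ∧ r b c ∧ r c a ∧ r a d ∧ r d b ∧ r c d)
    (hxy : r x y) (hyz : r y z) (hzx : r z x) (hvx : v ≠ x) (hvz : v ≠ z) (hvy : r v y) :
    r v x :=
  (htot v x hvx).resolve_right fun hxv ↦ not_rel_of_rel_of_cyclic htot hC4free hxy hyz hzx hvz hxv hvy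

end CyclicTriangle

theorem C4_free_triangle_dominates_general
    {V : Type*} (r : V → V → Prop)
    (htot : ∀ u v : V, u ≠ v → r u v ∨ r v u)
    (hC4free : ¬ ∃ a b c d : V,
      r a b ∧ r b c ∧ r c a ∧ r a d ∧ r d b ∧ r c d)
    (a b c : V) (hab : r a b) (hbc : r b c) (hca : r c a) :
    ∀ v : V, v ≠ a → v ≠ b → v ≠ c →
      (r a v ∧ r b v ∧ r c v) ∨ (r v a ∧ r v b ∧ r v c) := by
  intro v hva hvb hvc
  rcases htot a v hva.symm with hav | hva'
  · have hbv := rel_of_rel_of_cyclic htot hC4free hab hbc hca hvb hvc hav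
    exact Or.inl ⟨hav, hbv, rel_of_rel_of_cyclic htot hC4free hbc hca hab hvc hva hbv⟩
  · have hvc' := rel_of_rel_of_cyclic' htot hC4free hca hab hbc hvc hvb hva'
    exact Or.inr ⟨hva', rel_of_rel_of_cyclic' htot hC4free hbc hca hab hvb hva hvc', hvc'⟩

/-- In a `C₄`-free tournament, every vertex outside a cyclic triangle {a,b,c}
is a common out-neighbour or a common in-neighbour of all of a,b,c.
`C₄` has arcs a→b, b→c, c→a, a→d, d→b, c→d. -/
theorem C4_free_triangle_dominates
    {V : Type*} [Fintype V] (r : V → V → Prop)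
    (hasym : ∀ u v : V, r u v → ¬ r v u)
    (htot : ∀ u v : V, u ≠ v → r u v ∨ r v u)
    (hC4free : ¬ ∃ a b c d : V,
      r a b ∧ r b c ∧ r c a ∧ r a d ∧ r d b ∧ r c d)
    (a b c : V) (hab : r a b) (hbc : r b c) (hca : r c a) :
    ∀ v : V, v ≠ a → v ≠ b → v ≠ c →
      (r a v ∧ r b v ∧ r c v) ∨ (r v a ∧ r v b ∧ r v c) :=
  C4_free_triangle_dominates_general r htot hC4free a b c hab hbc hca
end

section
/- Let G be a C_4-free tournament containing a cyclic triangle T = {a,b,c}. Let T^+ be the set of common out-neighbors of a,b,c and T^- the set of common in-neighbors of a,b,c. Then every vertex of T^- has an arc to every vertex of T^+ (i.e., T^- ⇒ T^+). -/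
theorem C4_free_Tminus_beats_Tplus_general
    {V : Type*} (r : V → V → Prop)
    (hasym : ∀ u v : V, r u v → ¬ r v u)
    (htot : ∀ u v : V, u ≠ v → r u v ∨ r v u)
    (hC4free : ¬ ∃ a b c d : V,
      r a b ∧ r b c ∧ r c a ∧ r a d ∧ r d b ∧ r c d)
    (a b c : V) (hab : r a b) :
    ∀ u w : V, (r u a ∧ r u b ∧ r u c) → (r a w ∧ r b w ∧ r c w) → r u w := by
  rintro u w ⟨hua, hub, -⟩ ⟨haw, hbw, -⟩
  by_contra huw
  have hne : u ≠ w := by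
    rintro rfl
    exact hasym u a hua haw
  have hwu : r w u := (htot u w hne).resolve_left huw
  -- `a → w → u → a` is a cyclic triangle, and `b` completes it to a `C₄`.
  exact hC4free ⟨a, w, u, b, haw, hwu, hua, hab, hbw, hub⟩

/-- In a `C₄`-free tournament with a cyclic triangle {a,b,c}, the common
in-neighbours of the triangle all beat the common out-neighbours. -/
theorem C4_free_Tminus_beats_Tplus
    {V : Type*} [Fintype V] (r : V → V → Prop)
    (hasym : ∀ u v : V, r u v → ¬ r v u)
    (htot : ∀ u v : V, u ≠ v → r u v ∨ r v u)
    (hC4free : ¬ ∃ a b c d : V,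
      r a b ∧ r b c ∧ r c a ∧ r a d ∧ r d b ∧ r c d)
    (a b c : V) (hab : r a b) (hbc : r b c) (hca : r c a) :
    ∀ u w : V, (r u a ∧ r u b ∧ r u c) → (r a w ∧ r b w ∧ r c w) → r u w :=
  C4_free_Tminus_beats_Tplus_general r hasym htot hC4free a b c hab
end

section
/- Every strongly connected component of a C_4-free tournament has size 1 or 3. -/
/-!
A vertex outside a 3-cycle of a `C₄`-free tournament either beats the whole cycle or is beaten
by all of it, since each of the six mixed patterns spans a copy of `C₄`. The vertices beaten by
a 3-cycle `abc` are closed under out-arcs: if such a `d` beat some `x` beating the cycle, then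
`a → d → x → a` would be a 3-cycle which `b` both enters and leaves. Hence nothing outside the
cycle is strongly connected to it, and dually for the vertices beating it. On the other hand, in
any tournament a vertex lying on a cycle lies on a 3-cycle, as otherwise its out-neighbourhood
would be closed under out-arcs.
-/

open Relation Function

section

variable {V : Type*} {r : V → V → Prop}

def C4Free (r : V → V → Prop) : Prop :=
  ¬ ∃ a b c d : V, r a b ∧ r b c ∧ r c a ∧ r a d ∧ r d b ∧ r c d

/-- Reversing all arcs of `C₄` gives `C₄` again, via `a ↦ d, b ↦ c, c ↦ b, d ↦ a`. -/
theorem C4Free.swap (h : C4Free r) : C4Free (swap r) := by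
  rintro ⟨a, b, c, d, hba, hcb, hac, hda, hbd, hdc⟩
  exact h ⟨d, c, b, a, hdc, hcb, hbd, hda, hac, hba⟩

def strongComponent (r : V → V → Prop) (v : V) : Set V :=
  {u | ReflTransGen r v u ∧ ReflTransGen r u v}

/-- Tournaments appear as relations that are `Std.Asymm` and `Std.Trichotomous`. -/
theorem rel_or_rel_of_ne [Std.Trichotomous r] {a b : V} (h : a ≠ b) : r a b ∨ r b a :=
  (trichotomous_of r a b).imp_right (Or.resolve_left · h)

theorem exists_triangle_of_transGen_self [Std.Asymm r] [Std.Trichotomous r] {v : V}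
    (h : TransGen r v v) : ∃ a b, r v a ∧ r a b ∧ r b v := by
  by_contra! hno
  have hout : ∀ y, TransGen r v y → r v y := by
    intro y hy
    induction hy with
    | single h => exact h
    | @tail y z _ hyz hvy =>
      have hzv : z ≠ v := by rintro rfl; exact asymm hvy hyz
      exact (rel_or_rel_of_ne hzv.symm).resolve_right (hno y z hvy hyz)
  exact irrefl v (hout v h)

theorem exists_triangle_of_mem_strongComponent [Std.Asymm r] [Std.Trichotomous r] {u v : V}
    (hu : u ∈ strongComponent r v) (huv : u ≠ v) : ∃ a b, r v a ∧ r a b ∧ r b v := by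
  have hvu : TransGen r v u := (reflTransGen_iff_eq_or_transGen.1 hu.1).resolve_left huv
  exact exists_triangle_of_transGen_self (hvu.trans_left hu.2)

namespace C4Free

theorem dominates_or_dominated [Std.Trichotomous r] (hC : C4Free r) {a b c d : V}
    (hab : r a b) (hbc : r b c) (hca : r c a) (hda : d ≠ a) (hdb : d ≠ b) (hdc : d ≠ c) :
    (r d a ∧ r d b ∧ r d c) ∨ (r a d ∧ r b d ∧ r c d) := by
  rcases rel_or_rel_of_ne (r := r) hda with x1 | x1 <;>
    rcases rel_or_rel_of_ne (r := r) hdb with x2 | x2 <;>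
    rcases rel_or_rel_of_ne (r := r) hdc with x3 | x3
  · exact Or.inl ⟨x1, x2, x3⟩
  · exact absurd ⟨d, b, c, a, x2, hbc, x3, x1, hab, hca⟩ hC
  · exact absurd ⟨d, a, b, c, x1, hab, x2, x3, hca, hbc⟩ hC
  · exact absurd ⟨c, a, b, d, hca, hab, hbc, x3, x1, x2⟩ hC
  · exact absurd ⟨d, c, a, b, x3, hca, x1, x2, hbc, hab⟩ hC
  · exact absurd ⟨a, b, c, d, hab, hbc, hca, x1, x2, x3⟩ hC
  · exact absurd ⟨b, c, a, d, hbc, hca, hab, x2, x3, x1⟩ hC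
  · exact Or.inr ⟨x1, x2, x3⟩

theorem dominated_of_rel_of_dominated [Std.Asymm r] [Std.Trichotomous r] (hC : C4Free r)
    {a b c d x : V} (hab : r a b) (hbc : r b c) (hca : r c a) (hd : r a d ∧ r b d ∧ r c d)
    (hdx : r d x) : r a x ∧ r b x ∧ r c x := by
  obtain ⟨had, hbd, hcd⟩ := hd
  have hxa : x ≠ a := by rintro rfl; exact asymm had hdx
  have hxb : x ≠ b := by rintro rfl; exact asymm hbd hdx
  have hxc : x ≠ c := by rintro rfl; exact asymm hcd hdx
  refine (hC.dominates_or_dominated hab hbc hca hxa hxb hxc).resolve_left ?_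
  rintro ⟨hxa', hxb', -⟩
  rcases hC.dominates_or_dominated had hdx hxa' (ne_of_irrefl hab).symm (ne_of_irrefl hbd)
    (ne_of_irrefl hxb').symm with ⟨h, -, -⟩ | ⟨-, h, -⟩
  · exact asymm hab h
  · exact asymm hbd h

theorem dominated_of_reflTransGen [Std.Asymm r] [Std.Trichotomous r] (hC : C4Free r)
    {a b c d y : V} (hab : r a b) (hbc : r b c) (hca : r c a) (hd : r a d ∧ r b d ∧ r c d)
    (hdy : ReflTransGen r d y) : r a y ∧ r b y ∧ r c y := by
  induction hdy with
  | refl => exact hd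
  | tail _ hxy ih => exact hC.dominated_of_rel_of_dominated hab hbc hca ih hxy

theorem not_reflTransGen_of_dominated [Std.Asymm r] [Std.Trichotomous r] (hC : C4Free r)
    {a b c d : V} (hab : r a b) (hbc : r b c) (hca : r c a) (hd : r a d ∧ r b d ∧ r c d) :
    ¬ ReflTransGen r d a :=
  fun h => irrefl a (hC.dominated_of_reflTransGen hab hbc hca hd h).1

theorem not_reflTransGen_of_dominates [Std.Asymm r] [Std.Trichotomous r] (hC : C4Free r)
    {a b c d : V} (hab : r a b) (hbc : r b c) (hca : r c a) (hd : r d a ∧ r d b ∧ r d c) :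
    ¬ ReflTransGen r a d := by
  rw [← reflTransGen_swap]
  exact hC.swap.not_reflTransGen_of_dominated (r := Function.swap r) hca hbc hab ⟨hd.1, hd.2.2, hd.2.1⟩

theorem strongComponent_eq_of_triangle [Std.Asymm r] [Std.Trichotomous r] (hC : C4Free r)
    {a b c : V} (hab : r a b) (hbc : r b c) (hca : r c a) : strongComponent r a = {a, b, c} := by
  refine Set.Subset.antisymm (fun d hd => ?_) ?_
  · by_contra hne
    simp only [Set.mem_insert_iff, Set.mem_singleton_iff, not_or] at hne
    obtain ⟨hda, hdb, hdc⟩ := hne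
    rcases hC.dominates_or_dominated hab hbc hca hda hdb hdc with h | h
    · exact hC.not_reflTransGen_of_dominates hab hbc hca h hd.1
    · exact hC.not_reflTransGen_of_dominated hab hbc hca h hd.2
  · rintro d (rfl | rfl | rfl)
    · exact ⟨.refl, .refl⟩
    · exact ⟨.single hab, .head hbc (.single hca)⟩
    · exact ⟨.head hab (.single hbc), .single hca⟩

end C4Free

end

theorem C4_free_scc_size_one_or_three_general
    {V : Type*} (r : V → V → Prop)
    (hasym : ∀ u v : V, r u v → ¬ r v u)
    (htot : ∀ u v : V, u ≠ v → r u v ∨ r v u)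
    (hC4free : ¬ ∃ a b c d : V,
      r a b ∧ r b c ∧ r c a ∧ r a d ∧ r d b ∧ r c d) :
    ∀ v : V,
      ({u | Relation.ReflTransGen r v u ∧ Relation.ReflTransGen r u v} : Set V).ncard = 1 ∨
      ({u | Relation.ReflTransGen r v u ∧ Relation.ReflTransGen r u v} : Set V).ncard = 3 := by
  have : Std.Asymm r := ⟨hasym⟩
  have : Std.Trichotomous r := ⟨fun a b h₁ h₂ => by_contra fun hne => (htot a b hne).elim h₁ h₂⟩
  intro v
  change (strongComponent r v).ncard = 1 ∨ (strongComponent r v).ncard = 3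
  by_cases h : ∃ u ∈ strongComponent r v, u ≠ v
  · obtain ⟨u, hu, huv⟩ := h
    obtain ⟨a, b, hva, hab, hbv⟩ := exists_triangle_of_mem_strongComponent hu huv
    right
    rw [C4Free.strongComponent_eq_of_triangle hC4free hva hab hbv, Set.ncard_eq_three]
    exact ⟨v, a, b, ne_of_irrefl hva, (ne_of_irrefl hbv).symm, ne_of_irrefl hab, rfl⟩
  · push Not at h
    left
    exact Set.ncard_eq_one.2 ⟨v, Set.eq_singleton_iff_unique_mem.2 ⟨⟨.refl, .refl⟩, h⟩⟩

/-- Every strongly connected component of a `C₄`-free tournament has size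
1 or 3. -/
theorem C4_free_scc_size_one_or_three
    {V : Type*} [Fintype V] (r : V → V → Prop)
    (hasym : ∀ u v : V, r u v → ¬ r v u)
    (htot : ∀ u v : V, u ≠ v → r u v ∨ r v u)
    (hC4free : ¬ ∃ a b c d : V,
      r a b ∧ r b c ∧ r c a ∧ r a d ∧ r d b ∧ r c d) :
    ∀ v : V,
      ({u | Relation.ReflTransGen r v u ∧ Relation.ReflTransGen r u v} : Set V).ncard = 1 ∨
      ({u | Relation.ReflTransGen r v u ∧ Relation.ReflTransGen r u v} : Set V).ncard = 3 :=
  C4_free_scc_size_one_or_three_general r hasym htot hC4free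
end

section
/- Let G be a graph on vertices v_1,...,v_n and let G' be the graph on vertices v_1,v_1',...,v_n,v_n' whose edge set equals E(G) (on the original vertices). Let T be the tournament on these 2n vertices whose backedge graph under the ordering (v_1,v_1',...,v_n,v_n') is G'. Then for every minimum vertex cover C of G, the complement of C in V(T) induces a transitive subtournament of T, and the minimum size of a feedback vertex set of T equals the size of a minimum vertex cover of G. -/
/-- The ordering `(v_1, v_1', ..., v_n, v_n')` on `Fin n × Fin 2`:
`(i,a)` precedes `(j,b)` iff `i < j`, or `i = j` and `a < b`. -/
def dupOrd {n : ℕ} (x y : Fin n × Fin 2) : Prop :=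
  x.1 < y.1 ∨ (x.1 = y.1 ∧ x.2 < y.2)

/-- The tournament whose backedge graph, under the ordering
`(v_1, v_1', ..., v_n, v_n')`, consists of the edges of `G` placed on the
original (unprimed, i.e. second coordinate `0`) vertices. -/
def dupTournament {n : ℕ} (G : SimpleGraph (Fin n)) (x y : Fin n × Fin 2) : Prop :=
  (dupOrd x y ∧ ¬ (x.2 = 0 ∧ y.2 = 0 ∧ G.Adj x.1 y.1)) ∨
  (dupOrd y x ∧ (x.2 = 0 ∧ y.2 = 0 ∧ G.Adj x.1 y.1))

/-- `C` is a vertex cover of `G`. -/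
def IsVC {n : ℕ} (G : SimpleGraph (Fin n)) (C : Finset (Fin n)) : Prop :=
  ∀ i j : Fin n, G.Adj i j → i ∈ C ∨ j ∈ C

/-- `S` is a feedback vertex set of the tournament `r`: deleting `S` leaves a
transitive tournament. -/
def IsFVS {V : Type*} (r : V → V → Prop) (S : Finset V) : Prop :=
  ∀ x y z : V, x ∉ S → y ∉ S → z ∉ S → r x y → r y z → r x z

/-!
Outside the backedges the tournament is the transitive order `dupOrd`, so deleting the unprimed
copies of a vertex cover leaves it transitive. Conversely, an edge `v_i v_j` (`i < j`) of `G` gives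
the directed triangle `v_i → v_i' → v_j → v_i`, which a feedback vertex set must hit in a vertex over
`v_i` or `v_j`; so projecting a feedback vertex set to `Fin n` yields a vertex cover that is no larger.
-/

lemma dupOrd_trans {n : ℕ} {x y z : Fin n × Fin 2} (hxy : dupOrd x y) (hyz : dupOrd y z) :
    dupOrd x z := by
  rcases hxy with h | ⟨e, h⟩ <;> rcases hyz with h' | ⟨e', h'⟩
  · exact Or.inl (h.trans h')
  · exact Or.inl (e' ▸ h)
  · exact Or.inl (e ▸ h')
  · exact Or.inr ⟨e.trans e', h.trans h'⟩

section

variable {n : ℕ} {G : SimpleGraph (Fin n)}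

lemma dupOrd_of_dupTournament {x y : Fin n × Fin 2} (h : dupTournament G x y)
    (hxy : ¬ (x.2 = 0 ∧ y.2 = 0 ∧ G.Adj x.1 y.1)) : dupOrd x y := by
  rcases h with ⟨h, _⟩ | ⟨_, hback⟩
  · exact h
  · exact absurd hback hxy

lemma dupTournament_trans {x y z : Fin n × Fin 2}
    (hxy : ¬ (x.2 = 0 ∧ y.2 = 0 ∧ G.Adj x.1 y.1)) (hyz : ¬ (y.2 = 0 ∧ z.2 = 0 ∧ G.Adj y.1 z.1))
    (hxz : ¬ (x.2 = 0 ∧ z.2 = 0 ∧ G.Adj x.1 z.1))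
    (h₁ : dupTournament G x y) (h₂ : dupTournament G y z) : dupTournament G x z :=
  Or.inl ⟨dupOrd_trans (dupOrd_of_dupTournament h₁ hxy) (dupOrd_of_dupTournament h₂ hyz), hxz⟩

lemma isFVS_image_of_isVC {C : Finset (Fin n)} (hC : IsVC G C) :
    IsFVS (dupTournament G) (C.image fun i => (i, 0)) := by
  have not_back : ∀ x y : Fin n × Fin 2, x ∉ C.image (fun i => (i, 0)) →
      y ∉ C.image (fun i => (i, 0)) → ¬ (x.2 = 0 ∧ y.2 = 0 ∧ G.Adj x.1 y.1) := by
    rintro ⟨i, a⟩ ⟨j, b⟩ hx hy ⟨rfl, rfl, hadj⟩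
    rcases hC i j hadj with h | h
    · exact hx (Finset.mem_image_of_mem _ h)
    · exact hy (Finset.mem_image_of_mem _ h)
  intro x y z hx hy hz
  exact dupTournament_trans (not_back x y hx hy) (not_back y z hy hz) (not_back x z hx hz)

lemma IsFVS.exists_mem_of_adj {S : Finset (Fin n × Fin 2)} (hS : IsFVS (dupTournament G) S)
    {i j : Fin n} (hij : i < j) (hadj : G.Adj i j) : ∃ a, (i, a) ∈ S ∨ (j, a) ∈ S := by
  by_contra! hout
  have h₁ : dupTournament G (i, 0) (i, 1) :=
    Or.inl ⟨Or.inr ⟨rfl, Fin.zero_lt_one⟩, fun h => by simp at h⟩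
  have h₂ : dupTournament G (i, 1) (j, 0) := Or.inl ⟨Or.inl hij, fun h => by simp at h⟩
  have h₃ : dupTournament G (j, 0) (i, 0) := Or.inr ⟨Or.inl hij, rfl, rfl, hadj.symm⟩
  rcases hS _ _ _ (hout 0).1 (hout 1).1 (hout 0).2 h₁ h₂ with ⟨_, hfwd⟩ | ⟨hji, _⟩
  · exact hfwd ⟨rfl, rfl, hadj⟩
  · rcases hji with h | ⟨_, h⟩
    · exact lt_asymm hij h
    · simp at h

lemma isVC_image_fst_of_isFVS {S : Finset (Fin n × Fin 2)} (hS : IsFVS (dupTournament G) S) :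
    IsVC G (S.image Prod.fst) := by
  have cover : ∀ {i j}, i < j → G.Adj i j → i ∈ S.image Prod.fst ∨ j ∈ S.image Prod.fst := by
    intro i j hij hadj
    obtain ⟨a, hi | hj⟩ := hS.exists_mem_of_adj hij hadj
    · exact Or.inl (Finset.mem_image_of_mem Prod.fst hi)
    · exact Or.inr (Finset.mem_image_of_mem Prod.fst hj)
  intro i j hadj
  rcases lt_or_gt_of_ne hadj.ne with h | h
  · exact cover h hadj
  · exact (cover h hadj.symm).symm

end

/-- For any minimum vertex cover `C` of `G`: the complement of (the vertices
over) `C` induces a transitive subtournament of `T`, and the minimum size of a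
feedback vertex set of `T` equals `|C|`. -/
theorem reduction_vertex_cover_to_fvs
    (n : ℕ) (G : SimpleGraph (Fin n)) (C : Finset (Fin n))
    (hC : IsVC G C) (hCmin : ∀ C' : Finset (Fin n), IsVC G C' → C.card ≤ C'.card) :
    (∀ x y z : Fin n × Fin 2, x.1 ∉ C → y.1 ∉ C → z.1 ∉ C →
        dupTournament G x y → dupTournament G y z → dupTournament G x z) ∧
    sInf {k : ℕ | ∃ S : Finset (Fin n × Fin 2), IsFVS (dupTournament G) S ∧ S.card = k}
      = C.card := by
  have hFVS := isFVS_image_of_isVC hC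
  have not_mem_image : ∀ x : Fin n × Fin 2, x.1 ∉ C → x ∉ C.image fun i => (i, 0) := by
    intro x hx hmem
    obtain ⟨i, hi, rfl⟩ := Finset.mem_image.mp hmem
    exact hx hi
  refine ⟨fun x y z hx hy hz => hFVS x y z (not_mem_image x hx) (not_mem_image y hy)
    (not_mem_image z hz), ?_⟩
  have hmem : C.card ∈ {k : ℕ | ∃ S : Finset (Fin n × Fin 2),
      IsFVS (dupTournament G) S ∧ S.card = k} :=
    ⟨_, hFVS, Finset.card_image_of_injective _ fun _ _ h => (Prod.ext_iff.mp h).1⟩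
  refine le_antisymm (Nat.sInf_le hmem) (le_csInf ⟨_, hmem⟩ ?_)
  rintro k ⟨S, hS, rfl⟩
  calc C.card ≤ (S.image Prod.fst).card := hCmin _ (isVC_image_fst_of_isFVS hS)
    _ ≤ S.card := Finset.card_image_le
end

section
/- Let G be a graph, let G' be the graph obtained by duplicating each vertex v_i of G as a pair v_i, v_i' where all edges of G are kept on the original vertices and each v_i' is isolated, and let T be the tournament whose backedge graph under the ordering (v_1,v_1',...,v_n,v_n') is G'. If S is a set of vertices of T such that T \ S is transitive, and there is an edge {v_i, v_j} of G (i < j) with v_i, v_i', v_j all outside S, then T \ S contains a cyclic triangle, a contradiction; hence the set {v_i : {v_i,v_i'} ∩ S ≠ ∅} is a vertex cover of G. -/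
namespace dupTournament

variable {n : ℕ} (G : SimpleGraph (Fin n))

lemma zero_one (a : Fin n) : dupTournament G (a, 0) (a, 1) :=
  Or.inl ⟨Or.inr ⟨rfl, Fin.zero_lt_one⟩, fun h => Fin.zero_ne_one h.2.1.symm⟩

lemma one_zero {a b : Fin n} (hab : a < b) : dupTournament G (a, 1) (b, 0) :=
  Or.inl ⟨Or.inl hab, fun h => Fin.zero_ne_one h.1.symm⟩

lemma not_zero_zero_of_adj {a b : Fin n} (hab : a < b) (hadj : G.Adj a b) :
    ¬ dupTournament G (a, 0) (b, 0) := by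
  rintro (⟨-, hback⟩ | ⟨hord, -⟩)
  · exact hback ⟨rfl, rfl, hadj⟩
  · rcases hord with hba | ⟨hba, -⟩
    · exact hba.not_gt hab
    · exact hab.ne hba.symm

lemma mem_of_adj_of_lt {S : Set (Fin n × Fin 2)}
    (hS : ∀ x y z : Fin n × Fin 2, x ∉ S → y ∉ S → z ∉ S →
        dupTournament G x y → dupTournament G y z → dupTournament G x z)
    {a b : Fin n} (hab : a < b) (hadj : G.Adj a b) :
    (a, 0) ∈ S ∨ (a, 1) ∈ S ∨ (b, 0) ∈ S := by
  by_contra! ⟨ha₀, ha₁, hb₀⟩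
  exact not_zero_zero_of_adj G hab hadj
    (hS _ _ _ ha₀ ha₁ hb₀ (zero_one G a) (one_zero G hab))

end dupTournament

/-- If `S` hits every cyclic triangle of `T` (i.e. `T \ S` is transitive), then
the set of `v_i` with `{v_i, v_i'} ∩ S ≠ ∅` is a vertex cover of `G`. -/
theorem fvs_gives_vertex_cover
    (n : ℕ) (G : SimpleGraph (Fin n)) (S : Set (Fin n × Fin 2))
    (hS : ∀ x y z : Fin n × Fin 2, x ∉ S → y ∉ S → z ∉ S →
        dupTournament G x y → dupTournament G y z → dupTournament G x z) :
    ∀ i j : Fin n, G.Adj i j →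
      ((i, (0 : Fin 2)) ∈ S ∨ (i, (1 : Fin 2)) ∈ S) ∨
      ((j, (0 : Fin 2)) ∈ S ∨ (j, (1 : Fin 2)) ∈ S) := by
  intro i j hadj
  rcases lt_trichotomy i j with hij | rfl | hji
  · have := dupTournament.mem_of_adj_of_lt G hS hij hadj
    tauto
  · exact absurd hadj (G.irrefl)
  · have := dupTournament.mem_of_adj_of_lt G hS hji hadj.symm
    tauto
end

section
/- For every odd n ≥ 5, deleting the vertices v_{(n-1)/2} and v_n from U_n yields a tournament isomorphic to U_{n-2}. -/
/-- The tournament `T_n` on vertices `v_1, ..., v_n` (vertex `v_{i+1}` is the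
index `i : Fin n`): `v_i → v_j` iff `j - i ≡ 1, ..., (n-1)/2 (mod n)`. -/
def tnRel (n : ℕ) (i j : Fin n) : Prop :=
  1 ≤ (j.val + n - i.val) % n ∧ (j.val + n - i.val) % n ≤ (n - 1) / 2

/-- `U_n` is obtained from `T_n` by reversing all arcs with both ends in
`{v_1, ..., v_{(n-1)/2}}` (i.e. indices `< (n-1)/2`). -/
def unRel (n : ℕ) (i j : Fin n) : Prop :=
  if i.val < (n - 1) / 2 ∧ j.val < (n - 1) / 2 then tnRel n j i else tnRel n i j

/-! Number the vertices `0, …, 2h` (so `n = 2h + 1`). An arc of `T_n` goes forward exactly between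
vertices at distance at most `h`, so the arcs of `U_n` are determined by the order of the two
endpoints, whether both lie in the block `{0, …, h - 1}`, and whether they are at distance at most
`h`. Deleting `h - 1` and `2h` and closing the gap keeps the order and the block, and it keeps the
distance test: inside either part the distances stay within the new threshold `h - 1`, and across
the gap the distance drops by one, as does the threshold. -/

lemma tnRel_iff_of_odd {n : ℕ} (hn : Odd n) (i j : Fin n) :
    tnRel n i j ↔ i ≠ j ∧ (i.val < j.val ↔ Nat.dist i j ≤ (n - 1) / 2) := by
  obtain ⟨m, rfl⟩ := hn
  have hi := i.isLt
  have hj := j.isLt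
  rw [tnRel, Ne, Fin.ext_iff, Nat.dist]
  rcases le_or_gt i.val j.val with h | h
  · rw [show j.val + (2 * m + 1) - i.val = (j.val - i.val) + (2 * m + 1) by omega,
      Nat.add_mod_right, Nat.mod_eq_of_lt (by omega)]
    omega
  · rw [Nat.mod_eq_of_lt (by omega)]
    omega

/-- The increasing embedding of `Fin (n - 2)` into `Fin n` that skips `k` and `n - 1`. -/
def gapEmb (n k : ℕ) (a : Fin (n - 2)) : Fin n :=
  ⟨if a.val < k then a.val else a.val + 1, by split_ifs <;> omega⟩

section gapEmb

variable {n k : ℕ}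

lemma gapEmb_val_lt_iff (a b : Fin (n - 2)) :
    (gapEmb n k a).val < (gapEmb n k b).val ↔ a.val < b.val := by
  simp only [gapEmb]
  split_ifs <;> omega

lemma gapEmb_injective : Function.Injective (gapEmb n k) := by
  intro a b hab
  have hab' := congrArg Fin.val hab
  simp only [gapEmb] at hab'
  ext
  split_ifs at hab' <;> omega

lemma gapEmb_val_ne (a : Fin (n - 2)) :
    (gapEmb n k a).val ≠ k ∧ (gapEmb n k a).val ≠ n - 1 := by
  simp only [gapEmb]
  split_ifs <;> omega

lemma exists_gapEmb_eq (hk : k ≤ n - 2) (x : Fin n) (hx : x.val ≠ k ∧ x.val ≠ n - 1) :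
    ∃ a, gapEmb n k a = x := by
  have := x.isLt
  by_cases h : x.val < k
  · exact ⟨⟨x.val, by omega⟩, Fin.ext (by simp [gapEmb, h])⟩
  · refine ⟨⟨x.val - 1, by omega⟩, Fin.ext ?_⟩
    simp only [gapEmb]
    split_ifs <;> omega

noncomputable def gapEquiv (hk : k ≤ n - 2) :
    Fin (n - 2) ≃ {x : Fin n // x.val ≠ k ∧ x.val ≠ n - 1} :=
  Equiv.ofBijective (fun a => ⟨gapEmb n k a, gapEmb_val_ne a⟩)
    ⟨fun _ _ hab => gapEmb_injective (congrArg Subtype.val hab),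
      fun x => (exists_gapEmb_eq hk x.1 x.2).imp fun _ ha => Subtype.ext ha⟩

end gapEmb

section deletion

variable {n : ℕ}

lemma gapEmb_val_lt_half_iff (a : Fin (n - 2)) :
    (gapEmb n ((n - 1) / 2 - 1) a).val < (n - 1) / 2 ↔ a.val < (n - 2 - 1) / 2 := by
  simp only [gapEmb]
  split_ifs <;> omega

lemma dist_gapEmb_le_half_iff (hn : Odd n) (a b : Fin (n - 2)) :
    Nat.dist (gapEmb n ((n - 1) / 2 - 1) a) (gapEmb n ((n - 1) / 2 - 1) b) ≤ (n - 1) / 2 ↔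
      Nat.dist a b ≤ (n - 2 - 1) / 2 := by
  obtain ⟨m, rfl⟩ := hn
  have := a.isLt
  have := b.isLt
  simp only [gapEmb, Nat.dist]
  split_ifs <;> omega

lemma unRel_gapEmb_iff (hn : Odd n) (a b : Fin (n - 2)) :
    unRel n (gapEmb n ((n - 1) / 2 - 1) a) (gapEmb n ((n - 1) / 2 - 1) b) ↔ unRel (n - 2) a b := by
  have hn' : Odd (n - 2) := by
    obtain ⟨m, rfl⟩ := hn
    exact ⟨m - 1, by have := a.isLt; omega⟩
  simp only [unRel, tnRel_iff_of_odd hn, tnRel_iff_of_odd hn', gapEmb_injective.ne_iff,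
    gapEmb_val_lt_iff, gapEmb_val_lt_half_iff, Nat.dist_comm (gapEmb _ _ b).val,
    Nat.dist_comm b.val, dist_gapEmb_le_half_iff hn]

end deletion

theorem un_delete_two_iso_general (n : ℕ) (hn : Odd n) :
    ∃ e : {x : Fin n // x.val ≠ (n - 1) / 2 - 1 ∧ x.val ≠ n - 1} ≃ Fin (n - 2),
      ∀ x y : {x : Fin n // x.val ≠ (n - 1) / 2 - 1 ∧ x.val ≠ n - 1},
        unRel n x.1 y.1 ↔ unRel (n - 2) (e x) (e y) := by
  have hk : (n - 1) / 2 - 1 ≤ n - 2 := by omega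
  let g := gapEquiv hk
  refine ⟨g.symm, fun x y => ?_⟩
  obtain ⟨a, rfl⟩ := g.surjective x
  obtain ⟨b, rfl⟩ := g.surjective y
  rw [g.symm_apply_apply, g.symm_apply_apply]
  exact unRel_gapEmb_iff hn a b

/-- For odd `n ≥ 5`, deleting `v_{(n-1)/2}` and `v_n` from `U_n` gives a
tournament isomorphic to `U_{n-2}`. -/
theorem un_delete_two_iso (n : ℕ) (hn : Odd n) (h5 : 5 ≤ n) :
    ∃ e : {x : Fin n // x.val ≠ (n - 1) / 2 - 1 ∧ x.val ≠ n - 1} ≃ Fin (n - 2),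
      ∀ x y : {x : Fin n // x.val ≠ (n - 1) / 2 - 1 ∧ x.val ≠ n - 1},
        unRel n x.1 y.1 ↔ unRel (n - 2) (e x) (e y) :=
  un_delete_two_iso_general n hn
end

section
/- For every odd n ≥ 5, in the tournament U_n with B = {v_1,...,v_{(n−1)/2}} and A = {v_{(n+1)/2},...,v_n}, there is no cyclic triangle with exactly two vertices in B. -/
theorem Finset.pair_of_two_le_card_filter_triple {α : Type*} [DecidableEq α] {p : α → Prop}
    [DecidablePred p] {a b c : α} (h : 2 ≤ (({a, b, c} : Finset α).filter p).card) :
    p a ∧ p b ∨ p b ∧ p c ∨ p c ∧ p a := by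
  by_contra! hp
  have hle : (({a, b, c} : Finset α).filter p).card ≤ 1 := by
    by_cases pa : p a <;> by_cases pb : p b <;> by_cases pc : p c <;>
      simp_all [Finset.filter_insert, Finset.filter_singleton]
  omega

section Tournament

variable {n : ℕ}

theorem tnRel_iff_of_lt {i j : Fin n} (h : i < j) : tnRel n i j ↔ (j : ℕ) - i ≤ (n - 1) / 2 := by
  rw [Fin.lt_def] at h
  have hmod : ((j : ℕ) + n - i) % n = j - i := by
    rw [show (j : ℕ) + n - i = j - i + n by omega, Nat.add_mod_right,
      Nat.mod_eq_of_lt (by omega)]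
  simp only [tnRel, hmod]
  omega

theorem tnRel_iff_of_gt {i j : Fin n} (h : j < i) :
    tnRel n i j ↔ n - ((i : ℕ) - j) ≤ (n - 1) / 2 := by
  rw [Fin.lt_def] at h
  have hmod : ((j : ℕ) + n - i) % n = n - (i - j) := by
    rw [Nat.mod_eq_of_lt (by omega)]
    omega
  simp only [tnRel, hmod]
  omega

theorem not_tnRel_self (i : Fin n) : ¬ tnRel n i i := by
  simp [tnRel]

theorem lt_of_unRel_of_lt_half {a b : Fin n} (ha : (a : ℕ) < (n - 1) / 2)
    (hb : (b : ℕ) < (n - 1) / 2) (h : unRel n a b) : b < a := by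
  rw [unRel, if_pos ⟨ha, hb⟩] at h
  rcases lt_trichotomy a b with hab | rfl | hab
  · rw [tnRel_iff_of_gt hab] at h
    rw [Fin.lt_def] at hab
    omega
  · exact absurd h (not_tnRel_self a)
  · exact hab

theorem unRel_not_cyclic_of_two_lt_half {a b c : Fin n} (ha : (a : ℕ) < (n - 1) / 2)
    (hb : (b : ℕ) < (n - 1) / 2) (hab : unRel n a b) (hbc : unRel n b c) (hca : unRel n c a) :
    False := by
  have hba := lt_of_unRel_of_lt_half ha hb hab
  by_cases hc : (c : ℕ) < (n - 1) / 2
  · have hcb := lt_of_unRel_of_lt_half hb hc hbc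
    have hac := lt_of_unRel_of_lt_half hc ha hca
    exact lt_irrefl a ((hac.trans hcb).trans hba)
  have hbc' : (b : ℕ) < c := by omega
  have hac' : (a : ℕ) < c := by omega
  rw [unRel, if_neg (by omega), tnRel_iff_of_lt hbc'] at hbc
  rw [unRel, if_neg (by omega), tnRel_iff_of_gt hac'] at hca
  rw [Fin.lt_def] at hba
  omega

end Tournament

theorem un_no_triangle_two_in_B_general (n : ℕ) :
    ∀ a b c : Fin n, unRel n a b → unRel n b c → unRel n c a →
      (({a, b, c} : Finset (Fin n)).filter (fun x => x.val < (n - 1) / 2)).card ≠ 2 := by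
  intro a b c hab hbc hca hcard
  rcases Finset.pair_of_two_le_card_filter_triple hcard.ge with ⟨ha, hb⟩ | ⟨hb, hc⟩ | ⟨hc, ha⟩
  · exact unRel_not_cyclic_of_two_lt_half ha hb hab hbc hca
  · exact unRel_not_cyclic_of_two_lt_half hb hc hbc hca hab
  · exact unRel_not_cyclic_of_two_lt_half hc ha hca hab hbc

/-- For odd `n ≥ 5`, `U_n` has no cyclic triangle with exactly two vertices in
`B = {v_1, ..., v_{(n-1)/2}}`. -/
theorem un_no_triangle_two_in_B (n : ℕ) (hn : Odd n) (h5 : 5 ≤ n) :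
    ∀ a b c : Fin n, unRel n a b → unRel n b c → unRel n c a →
      (({a, b, c} : Finset (Fin n)).filter (fun x => x.val < (n - 1) / 2)).card ≠ 2 :=
  un_no_triangle_two_in_B_general n
end

section
/- Let G be a tournament, X a nontrivial homogeneous set of G, and let S be a transitive-inducing subset of V(G) of maximum weight with respect to a weight function w: V(G) → ℚ₊. If S ∩ X ≠ ∅, then S ∩ X is a subset of X inducing a transitive tournament of maximum weight among all such subsets of X. -/
/-- `X` is a homogeneous set of the tournament `r`. -/
def IsHomog {V : Type*} (r : V → V → Prop) (X : Finset V) : Prop :=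
  ∀ v : V, v ∉ X → (∀ x ∈ X, r v x) ∨ (∀ x ∈ X, r x v)

/-- `S` is an independent set: it induces a transitive subtournament. -/
def IsIndep {V : Type*} (r : V → V → Prop) (S : Finset V) : Prop :=
  ∀ a ∈ S, ∀ b ∈ S, ∀ c ∈ S, r a b → r b c → r a c

/-!
Replacing `S ∩ X` by any independent `U ⊆ X` keeps `S` independent: a vertex outside the
homogeneous set `X` relates to every vertex of `X` in the same way, so inside a transitive triple
any vertex of `U` may be traded for a fixed vertex `x₀ ∈ S ∩ X`, and transitivity of `S` applies.
Hence `w (S \ X) + w U ≤ w S = w (S \ X) + w (S ∩ X)`.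
-/

namespace IsHomog

variable {V : Type*} {r : V → V → Prop} {X : Finset V}

theorem rel_iff_left (hX : IsHomog r X) (hasym : ∀ u v, r u v → ¬ r v u)
    {a x y : V} (ha : a ∉ X) (hx : x ∈ X) (hy : y ∈ X) : r a x ↔ r a y := by
  rcases hX a ha with h | h
  · exact iff_of_true (h x hx) (h y hy)
  · exact iff_of_false (hasym _ _ (h x hx)) (hasym _ _ (h y hy))

theorem rel_iff_right (hX : IsHomog r X) (hasym : ∀ u v, r u v → ¬ r v u)
    {a x y : V} (ha : a ∉ X) (hx : x ∈ X) (hy : y ∈ X) : r x a ↔ r y a := by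
  rcases hX a ha with h | h
  · exact iff_of_false (hasym _ _ (h x hx)) (hasym _ _ (h y hy))
  · exact iff_of_true (h x hx) (h y hy)

end IsHomog

theorem IsIndep.sdiff_union_of_isHomog {V : Type*} [DecidableEq V] {r : V → V → Prop}
    (hasym : ∀ u v, r u v → ¬ r v u) {X S U : Finset V} (hX : IsHomog r X)
    (hS : IsIndep r S) (hSX : (S ∩ X).Nonempty) (hUX : U ⊆ X) (hU : IsIndep r U) :
    IsIndep r (S \ X ∪ U) := by
  obtain ⟨x₀, hx₀⟩ := hSX
  rw [Finset.mem_inter] at hx₀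
  have left := @IsHomog.rel_iff_left _ _ _ hX hasym
  have right := @IsHomog.rel_iff_right _ _ _ hX hasym
  have mem_S : ∀ v ∈ S \ X ∪ U, v ∉ X → v ∈ S := fun v hv hvX ↦ by
    rcases Finset.mem_union.mp hv with hv | hv
    · exact (Finset.mem_sdiff.mp hv).1
    · exact absurd (hUX hv) hvX
  have mem_U : ∀ v ∈ S \ X ∪ U, v ∈ X → v ∈ U := fun v hv hvX ↦ by
    rcases Finset.mem_union.mp hv with hv | hv
    · exact absurd hvX (Finset.mem_sdiff.mp hv).2
    · exact hv
  intro a ha b hb c hc hab hbc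
  by_cases haX : a ∈ X <;> by_cases hbX : b ∈ X <;> by_cases hcX : c ∈ X
  · exact hU a (mem_U a ha haX) b (mem_U b hb hbX) c (mem_U c hc hcX) hab hbc
  · exact (right hcX hbX haX).mp hbc
  · exact absurd ((right hbX haX hx₀.2).mp hab) (hasym _ _ ((left hbX hcX hx₀.2).mp hbc))
  · have hx₀c := hS x₀ hx₀.1 b (mem_S b hb hbX) c (mem_S c hc hcX)
      ((right hbX haX hx₀.2).mp hab) hbc
    exact (right hcX hx₀.2 haX).mp hx₀c
  · exact (left haX hbX hcX).mp hab
  · exact hS a (mem_S a ha haX) x₀ hx₀.1 c (mem_S c hc hcX) ((left haX hbX hx₀.2).mp hab)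
      ((right hcX hbX hx₀.2).mp hbc)
  · have hax₀ := hS a (mem_S a ha haX) b (mem_S b hb hbX) x₀ hx₀.1 hab
      ((left hbX hcX hx₀.2).mp hbc)
    exact (left haX hx₀.2 hcX).mp hax₀
  · exact hS a (mem_S a ha haX) b (mem_S b hb hbX) c (mem_S c hc hcX) hab hbc

theorem max_indep_meets_homogeneous_set_general
    {V : Type*} [DecidableEq V] (r : V → V → Prop)
    (hasym : ∀ u v : V, r u v → ¬ r v u)
    (w : V → ℚ)
    (X : Finset V) (hX : IsHomog r X)
    (S : Finset V) (hS : IsIndep r S)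
    (hSmax : ∀ S' : Finset V, IsIndep r S' → ∑ v ∈ S', w v ≤ ∑ v ∈ S, w v)
    (hSX : (S ∩ X).Nonempty) :
    ∀ U : Finset V, U ⊆ X → IsIndep r U → ∑ v ∈ U, w v ≤ ∑ v ∈ S ∩ X, w v := by
  intro U hUX hU
  have hswap := hSmax _ (hS.sdiff_union_of_isHomog hasym hX hSX hUX hU)
  rw [Finset.sum_union (Finset.sdiff_disjoint.mono_right hUX),
    ← Finset.sum_inter_add_sum_sdiff S X w] at hswap
  linarith

/-- If `X` is a nontrivial homogeneous set and `S` is a maximum-weight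
independent set with `S ∩ X ≠ ∅`, then `S ∩ X` is a maximum-weight
independent subset of `X`. -/
theorem max_indep_meets_homogeneous_set
    {V : Type*} [Fintype V] [DecidableEq V] (r : V → V → Prop)
    (hasym : ∀ u v : V, r u v → ¬ r v u)
    (htot : ∀ u v : V, u ≠ v → r u v ∨ r v u)
    (w : V → ℚ) (hw : ∀ v, 0 ≤ w v)
    (X : Finset V) (hX : IsHomog r X)
    (hX1 : 1 < X.card) (hX2 : X.card < Fintype.card V)
    (S : Finset V) (hS : IsIndep r S)
    (hSmax : ∀ S' : Finset V, IsIndep r S' → ∑ v ∈ S', w v ≤ ∑ v ∈ S, w v)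
    (hSX : (S ∩ X).Nonempty) :
    ∀ U : Finset V, U ⊆ X → IsIndep r U → ∑ v ∈ U, w v ≤ ∑ v ∈ S ∩ X, w v :=
  max_indep_meets_homogeneous_set_general r hasym w X hX S hS hSmax hSX
end

section
/- Let G be a tournament with vertex partition (X, Y, Z) such that X ∪ Y, Y ∪ Z, and Z ∪ X each induce transitive subtournaments. Call a cyclic triangle {x,y,z} with x∈X, y∈Y, z∈Z an XYZ triangle if x→y, y→z, z→x, and an XZY triangle if x→z, z→y, y→x. Then for every vertex v, either every cyclic triangle containing v is an XYZ triangle, or every cyclic triangle containing v is an XZY triangle. -/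
/-!
Two cyclic triangles of opposite orientation through a common vertex `a ∈ X`, say
`a → y → z → a` and `a → z' → y' → a`, cannot coexist: transitivity on `Z ∪ X`, `X ∪ Y`
and `Y ∪ Z` successively gives `z → z'`, `y' → y`, `z → y'` and finally `z → y`,
against `y → z`. Rotating the roles of `X, Y, Z` covers a common vertex in `Y` or `Z`,
and two triangles through `v` with one vertex in each class must share their vertex of
the class containing `v`.
-/

section

variable {V : Type*}

def TransitiveOn (r : V → V → Prop) (s : Set V) : Prop :=
  ∀ a ∈ s, ∀ b ∈ s, ∀ c ∈ s, r a b → r b c → r a c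

theorem false_of_opposite_triangles_at {r : V → V → Prop} (hasym : ∀ u v, r u v → ¬ r v u)
    {A B C : Set V} (hAB : TransitiveOn r (A ∪ B)) (hBC : TransitiveOn r (B ∪ C))
    (hCA : TransitiveOn r (C ∪ A)) {a b c b' c' : V} (ha : a ∈ A) (hb : b ∈ B) (hc : c ∈ C)
    (hb' : b' ∈ B) (hc' : c' ∈ C) (h₁ : r a b ∧ r b c ∧ r c a)
    (h₂ : r a c' ∧ r c' b' ∧ r b' a) : False := by
  obtain ⟨hab, hbc, hca⟩ := h₁
  obtain ⟨hac', hc'b', hb'a⟩ := h₂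
  have hcc' : r c c' := hCA c (.inl hc) a (.inr ha) c' (.inl hc') hca hac'
  have hb'b : r b' b := hAB b' (.inr hb') a (.inl ha) b (.inr hb) hb'a hab
  have hcb' : r c b' := hBC c (.inr hc) c' (.inr hc') b' (.inl hb') hcc' hc'b'
  have hcb : r c b := hBC c (.inr hc) b' (.inl hb') b (.inl hb) hcb' hb'b
  exact hasym b c hbc hcb

theorem eq_or_eq_or_eq_of_mem_of_mem {X Y Z : Set V} (hXY : Disjoint X Y) (hYZ : Disjoint Y Z)
    (hZX : Disjoint Z X) {v x y z x' y' z' : V} (hx : x ∈ X) (hy : y ∈ Y) (hz : z ∈ Z)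
    (hx' : x' ∈ X) (hy' : y' ∈ Y) (hz' : z' ∈ Z) (hv : v = x ∨ v = y ∨ v = z)
    (hv' : v = x' ∨ v = y' ∨ v = z') : x = x' ∨ y = y' ∨ z = z' := by
  rcases hv with rfl | rfl | rfl <;> rcases hv' with rfl | rfl | rfl <;>
    simp_all [Set.disjoint_left]

end

theorem single_triangle_type_general
    {V : Type*} (r : V → V → Prop)
    (hasym : ∀ u v : V, r u v → ¬ r v u)
    (X Y Z : Set V)
    (hXY : Disjoint X Y) (hYZ : Disjoint Y Z) (hZX : Disjoint Z X)
    (htXY : ∀ a ∈ X ∪ Y, ∀ b ∈ X ∪ Y, ∀ c ∈ X ∪ Y, r a b → r b c → r a c)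
    (htYZ : ∀ a ∈ Y ∪ Z, ∀ b ∈ Y ∪ Z, ∀ c ∈ Y ∪ Z, r a b → r b c → r a c)
    (htZX : ∀ a ∈ Z ∪ X, ∀ b ∈ Z ∪ X, ∀ c ∈ Z ∪ X, r a b → r b c → r a c) :
    ∀ v : V,
      (∀ x y z : V, x ∈ X → y ∈ Y → z ∈ Z → (v = x ∨ v = y ∨ v = z) →
        ((r x y ∧ r y z ∧ r z x) ∨ (r x z ∧ r z y ∧ r y x)) →
        (r x y ∧ r y z ∧ r z x)) ∨
      (∀ x y z : V, x ∈ X → y ∈ Y → z ∈ Z → (v = x ∨ v = y ∨ v = z) →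
        ((r x y ∧ r y z ∧ r z x) ∨ (r x z ∧ r z y ∧ r y x)) →
        (r x z ∧ r z y ∧ r y x)) := by
  intro v
  by_contra! h
  obtain ⟨⟨x, y, z, hx, hy, hz, hv, hcyc, hnot⟩,
    ⟨x', y', z', hx', hy', hz', hv', hcyc', hnot'⟩⟩ := h
  have hxzy := hcyc.resolve_left fun ⟨h₁, h₂, h₃⟩ => hnot h₁ h₂ h₃
  have hxyz := hcyc'.resolve_right fun ⟨h₁, h₂, h₃⟩ => hnot' h₁ h₂ h₃
  rcases eq_or_eq_or_eq_of_mem_of_mem hXY hYZ hZX hx hy hz hx' hy' hz' hv hv'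
    with rfl | rfl | rfl
  · exact false_of_opposite_triangles_at hasym htXY htYZ htZX hx hy' hz' hy hz hxyz hxzy
  · exact false_of_opposite_triangles_at hasym htYZ htZX htXY hy hz' hx' hz hx
      ⟨hxyz.2.1, hxyz.2.2, hxyz.1⟩ ⟨hxzy.2.2, hxzy.1, hxzy.2.1⟩
  · exact false_of_opposite_triangles_at hasym htZX htXY htYZ hz hx' hy' hx hy
      ⟨hxyz.2.2, hxyz.1, hxyz.2.1⟩ ⟨hxzy.2.1, hxzy.2.2, hxzy.1⟩

/-- In a tournament partitioned into `X, Y, Z` with `X ∪ Y`, `Y ∪ Z`, `Z ∪ X`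
all transitive, every vertex `v` lies only in XYZ triangles, or only in XZY
triangles. -/
theorem single_triangle_type
    {V : Type*} [Fintype V] (r : V → V → Prop)
    (hasym : ∀ u v : V, r u v → ¬ r v u)
    (htot : ∀ u v : V, u ≠ v → r u v ∨ r v u)
    (X Y Z : Set V)
    (hcover : X ∪ Y ∪ Z = Set.univ)
    (hXY : Disjoint X Y) (hYZ : Disjoint Y Z) (hZX : Disjoint Z X)
    (htXY : ∀ a ∈ X ∪ Y, ∀ b ∈ X ∪ Y, ∀ c ∈ X ∪ Y, r a b → r b c → r a c)
    (htYZ : ∀ a ∈ Y ∪ Z, ∀ b ∈ Y ∪ Z, ∀ c ∈ Y ∪ Z, r a b → r b c → r a c)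
    (htZX : ∀ a ∈ Z ∪ X, ∀ b ∈ Z ∪ X, ∀ c ∈ Z ∪ X, r a b → r b c → r a c) :
    ∀ v : V,
      (∀ x y z : V, x ∈ X → y ∈ Y → z ∈ Z → (v = x ∨ v = y ∨ v = z) →
        ((r x y ∧ r y z ∧ r z x) ∨ (r x z ∧ r z y ∧ r y x)) →
        (r x y ∧ r y z ∧ r z x)) ∨
      (∀ x y z : V, x ∈ X → y ∈ Y → z ∈ Z → (v = x ∨ v = y ∨ v = z) →
        ((r x y ∧ r y z ∧ r z x) ∨ (r x z ∧ r z y ∧ r y x)) →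
        (r x z ∧ r z y ∧ r y x)) :=
  single_triangle_type_general r hasym X Y Z hXY hYZ hZX htXY htYZ htZX
end

section
/- Let G be a strongly connected tournament and let S be a proper nonempty subset of V(G) such that G[S] is strongly connected and G is prime (has no nontrivial homogeneous set) with |V(G)| ≥ 3 and |S| ≥ 3. Then there exists a vertex i ∉ S that forms a cyclic triangle with two vertices of S. -/
/-- `X` is a homogeneous set of the tournament `r`. -/
def IsHomogSet {V : Type*} (r : V → V → Prop) (X : Set V) : Prop :=
  ∀ v : V, v ∉ X → (∀ x ∈ X, r v x) ∨ (∀ x ∈ X, r x v)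

/-- In a prime strongly connected tournament, for any proper subset `S` of at
least 3 vertices inducing a strongly connected subtournament, some vertex
outside `S` forms a cyclic triangle with two vertices of `S`. -/
theorem prime_extend_strongly_connected
    {V : Type*} [Fintype V] (r : V → V → Prop)
    (hasym : ∀ u v : V, r u v → ¬ r v u)
    (htot : ∀ u v : V, u ≠ v → r u v ∨ r v u)
    (hcard : 3 ≤ Fintype.card V)
    (hstrong : ∀ u v : V, Relation.ReflTransGen r u v)
    (hprime : ¬ ∃ X : Set V, 1 < X.ncard ∧ X.ncard < Fintype.card V ∧
      IsHomogSet r X)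
    (S : Set V) (hSne : S.Nonempty) (hSproper : S ≠ Set.univ) (hS3 : 3 ≤ S.ncard)
    (hSstrong : ∀ u ∈ S, ∀ v ∈ S,
      Relation.ReflTransGen (fun a b => a ∈ S ∧ b ∈ S ∧ r a b) u v) :
    ∃ i : V, i ∉ S ∧ ∃ u ∈ S, ∃ v ∈ S, r u v ∧ r v i ∧ r i u := by
  -- S is not homogeneous, since it would be a nontrivial homogeneous set.
  have hlt : S.ncard < Fintype.card V := by
    have : S.ncard < (Set.univ : Set V).ncard :=
      Set.ncard_lt_ncard (hSproper.lt_top.trans_le le_rfl) Set.finite_univ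
    simpa [Set.ncard_univ, Nat.card_eq_fintype_card] using this
  have hnothom : ¬ IsHomogSet r S := fun h =>
    hprime ⟨S, by omega, hlt, h⟩
  -- extract i ∉ S with y ∈ S, r i y and x ∈ S, r x i
  rw [IsHomogSet] at hnothom
  push_neg at hnothom
  obtain ⟨i, hiS, ⟨x, hxS, hix⟩, ⟨y, hyS, hyi⟩⟩ := hnothom
  have hxi : r x i := (htot x i (fun h => hiS (h ▸ hxS))).resolve_right hix
  have hiy : r i y := (htot i y (fun h => hiS (h ▸ hyS))).resolve_right hyi
  refine ⟨i, hiS, ?_⟩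
  -- walk from y to x inside S; find where i stops beating.
  have key : ∀ a b : V, Relation.ReflTransGen (fun a b => a ∈ S ∧ b ∈ S ∧ r a b) a b →
      r i a → r b i → ∃ u ∈ S, ∃ v ∈ S, r u v ∧ r v i ∧ r i u := by
    intro a b hab
    induction hab using Relation.ReflTransGen.head_induction_on with
    | refl => intro h1 h2; exact absurd h1 (hasym _ _ h2)
    | head hstep _ ih =>
      rename_i a c _
      intro hia hbi
      obtain ⟨haS, hcS, hac⟩ := hstep
      by_cases hic : r i c
      · exact ih hic hbi
      · have hci : r c i := (htot c i (fun h => hiS (h ▸ hcS))).resolve_right hic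
        exact ⟨a, haS, c, hcS, hac, hci, hia⟩
  exact key y x (hSstrong y hyS x hxS) hiy hxi
end
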